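/- Let (V, ⟨o, t⟩) be a K-linear weighted automaton and define the sequence of relations R₀ = ker(o) and R_{i+1} = R_i ∩ ⋂_{a∈A} {(u,v) | (t(u)(a), t(v)(a)) ∈ R_i}. Then for all n, R_n = ker(!_{n+1}), where !_{n+1}(v) : A*_{n+1} → K is defined by !_{n+1}(v)(ε) = o(v) and !_{n+1}(v)(aw) = !_n(t(v)(a))(w); equivalently, (u,v) ∈ R_n iff σ_l(u)(w) = σ_l(v)(w) for all words w of length at most n. In particular each R_n is a K-linear relation. -/
import Mathlib


universe u

/-- A relation is `K`-linear iff it is the kernel of some `K`-linear map out of `V`. -/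
def IsLinearRel (K : Type u) {V : Type u} [Semiring K] [AddCommMonoid V]
    [Module K V] (S : V → V → Prop) : Prop :=
  ∃ (W : Type u) (_ : AddCommMonoid W) (_ : Module K W) (f : V →ₗ[K] W),
    ∀ u v : V, S u v ↔ f u = f v

/-- The weighted language recognized by a state `v`. -/
def sigmaL {K V A : Type u} [Semiring K] [AddCommMonoid V] [Module K V]
    (o : V →ₗ[K] K) (t : V →ₗ[K] (A → V)) (v : V) : List A → K
  | [] => o v
  | a :: w => sigmaL o t (t v a) w

/-- The partition refinement sequence `R₀ = ker o`,
`R_{i+1} = R_i ∩ ⋂_a {(u,v) | (t u a, t v a) ∈ R_i}`. -/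
def Rseq {K V A : Type u} [Semiring K] [AddCommMonoid V] [Module K V]
    (o : V →ₗ[K] K) (t : V →ₗ[K] (A → V)) : ℕ → V → V → Prop
  | 0 => fun u v => o u = o v
  | n + 1 => fun u v => Rseq o t n u v ∧ ∀ a : A, Rseq o t n (t u a) (t v a)

lemma sigmaL_add {K V A : Type u} [Semiring K] [AddCommMonoid V] [Module K V]
    (o : V →ₗ[K] K) (t : V →ₗ[K] (A → V)) (w : List A) (u v : V) :
    sigmaL o t (u + v) w = sigmaL o t u w + sigmaL o t v w := by
  induction w generalizing u v with
  | nil => simp [sigmaL]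
  | cons a w ih => simp [sigmaL, ih]

lemma sigmaL_smul {K V A : Type u} [Semiring K] [AddCommMonoid V] [Module K V]
    (o : V →ₗ[K] K) (t : V →ₗ[K] (A → V)) (w : List A) (c : K) (v : V) :
    sigmaL o t (c • v) w = c * sigmaL o t v w := by
  induction w generalizing v with
  | nil => simp [sigmaL]
  | cons a w ih => simp [sigmaL, ih]

/-- `R_n = ker(!_{n+1})`: `(u,v) ∈ R_n` iff `u` and `v` recognize the same weights
on all words of length at most `n`; in particular each `R_n` is a `K`-linear
relation. -/
theorem refinement_sequence_eq_ker_final_sequence {K V A : Type u} [Semiring K]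
    [AddCommMonoid V] [Module K V]
    (o : V →ₗ[K] K) (t : V →ₗ[K] (A → V)) :
    (∀ (n : ℕ) (u v : V), Rseq o t n u v ↔
      ∀ w : List A, w.length ≤ n → sigmaL o t u w = sigmaL o t v w) ∧
    (∀ n : ℕ, IsLinearRel K (Rseq o t n)) := by
  have main : ∀ (n : ℕ) (u v : V), Rseq o t n u v ↔
      ∀ w : List A, w.length ≤ n → sigmaL o t u w = sigmaL o t v w := by
    intro n
    induction n with
    | zero =>
      intro u v
      constructor
      · intro h w hw
        match w, hw with
        | [], _ => exact h
      · intro h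
        exact h [] (by simp)
    | succ n ih =>
      intro u v
      constructor
      · rintro ⟨h1, h2⟩ w hw
        match w with
        | [] => exact (ih u v).1 h1 [] (by simp)
        | a :: w =>
          exact (ih (t u a) (t v a)).1 (h2 a) w (Nat.succ_le_succ_iff.mp hw)
      · intro h
        refine ⟨(ih u v).2 fun w hw => h w (hw.trans (Nat.le_succ n)), fun a => ?_⟩
        exact (ih (t u a) (t v a)).2 fun w hw => h (a :: w) (Nat.succ_le_succ hw)
  refine ⟨main, fun n => ?_⟩
  refine ⟨{w : List A // w.length ≤ n} → K, inferInstance, inferInstance,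
    { toFun := fun v w => sigmaL o t v w.1
      map_add' := fun u v => funext fun w => sigmaL_add o t w.1 u v
      map_smul' := fun c v => funext fun w => sigmaL_smul o t w.1 c v }, ?_⟩
  intro u v
  rw [main]
  constructor
  · intro h; funext w; exact h w.1 w.2
  · intro h w hw; exact congrFun h ⟨w, hw⟩
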